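/- arXiv:2508.08369 — 2 statements merged into one kernel-verified Lean document; each statement's English description precedes it below -/
import Mathlib

section
/- Let m ≥ 1 and s ∈ ℝ^m. The function p ↦ -∑_{j=1}^m p_j s_j + (1/2)∑_{j=1}^m p_j² has a unique minimizer p* over the probability simplex Δ^{m-1}, and there exists a threshold t ∈ ℝ such that p*_j = max(0, s_j - t) for every j and ∑_{j=1}^m max(0, s_j - t) = 1. (This is the Sparsemax transformation.) -/
open Finset

/-!
With `q j = max 0 (s j - t)` and `t` chosen by the intermediate value theorem so that
`∑ j, q j = 1`, every `p` in the simplex satisfies `J q + ½ ‖p - q‖² ≤ J p`: expanding `J p - J q`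
around `q`, the linear term is `∑ j, (p j - q j) * (q j - (s j - t))` (the shift by `t` costs
nothing because `p` and `q` have the same mass), and each summand is nonnegative. So `q` is the
minimizer and any other minimizer lies at distance zero from it.
-/

variable {ι : Type*} [Fintype ι]

noncomputable def sparsemaxObjective (s p : ι → ℝ) : ℝ :=
  -∑ j, p j * s j + (1/2) * ∑ j, p j ^ 2

theorem exists_sum_max_zero_sub_eq [Nonempty ι] (s : ι → ℝ) {c : ℝ} (hc : 0 ≤ c) :
    ∃ t, ∑ j, max 0 (s j - t) = c := by
  obtain ⟨j₀, hj₀⟩ := Finite.exists_max s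
  set F : ℝ → ℝ := fun t => ∑ j, max 0 (s j - t)
  have hF : Continuous F := by fun_prop
  have hF_top : F (s j₀) = 0 := sum_eq_zero fun j _ => max_eq_left (by linarith [hj₀ j])
  have hF_bot : c ≤ F (s j₀ - c) :=
    calc c = max 0 (s j₀ - (s j₀ - c)) := by simp [hc]
      _ ≤ F (s j₀ - c) :=
        single_le_sum (f := fun j => max 0 (s j - (s j₀ - c)))
          (fun _ _ => le_max_left _ _) (mem_univ j₀)
  obtain ⟨t, -, ht⟩ := intermediate_value_Icc' (by linarith) hF.continuousOn
    ⟨hF_top.le.trans hc, hF_bot⟩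
  exact ⟨t, ht⟩

theorem mul_max_zero_sub_nonneg {p : ℝ} (hp : 0 ≤ p) (x : ℝ) :
    0 ≤ (p - max 0 x) * (max 0 x - x) := by
  rcases le_total 0 x with hx | hx
  · simp [max_eq_right hx]
  · rw [max_eq_left hx, sub_zero]
    exact mul_nonneg hp (by linarith)

section Threshold

variable {s : ι → ℝ} {t : ℝ}

theorem sparsemaxObjective_add_half_sum_sq_le (ht : ∑ j, max 0 (s j - t) = 1)
    {p : ι → ℝ} (hp : p ∈ stdSimplex ℝ ι) :
    sparsemaxObjective s (fun j => max 0 (s j - t)) +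
        (1/2) * ∑ j, (p j - max 0 (s j - t)) ^ 2 ≤ sparsemaxObjective s p := by
  set q : ι → ℝ := fun j => max 0 (s j - t)
  have hcross : 0 ≤ ∑ j, (p j - q j) * (q j - (s j - t)) :=
    sum_nonneg fun j _ => mul_max_zero_sub_nonneg (hp.1 j) _
  have hmass : ∑ j, (p j - q j) = 0 := by rw [sum_sub_distrib, hp.2, ht, sub_self]
  have hexpand : sparsemaxObjective s p - sparsemaxObjective s q =
      ∑ j, (p j - q j) * (q j - (s j - t)) - t * ∑ j, (p j - q j) +
        (1/2) * ∑ j, (p j - q j) ^ 2 := by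
    simp only [sparsemaxObjective, mul_sum, ← sum_neg_distrib, ← sum_add_distrib,
      ← sum_sub_distrib]
    exact sum_congr rfl fun j _ => by ring
  rw [hmass, mul_zero, sub_zero] at hexpand
  linarith

theorem isMinOn_sparsemaxObjective (ht : ∑ j, max 0 (s j - t) = 1) :
    IsMinOn (sparsemaxObjective s) (stdSimplex ℝ ι) (fun j => max 0 (s j - t)) := by
  refine isMinOn_iff.mpr fun p hp => ?_
  have := sparsemaxObjective_add_half_sum_sq_le ht hp
  have : 0 ≤ ∑ j, (p j - max 0 (s j - t)) ^ 2 := sum_nonneg fun j _ => sq_nonneg _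
  linarith

theorem eq_of_isMinOn_sparsemaxObjective (ht : ∑ j, max 0 (s j - t) = 1)
    {p : ι → ℝ} (hp : p ∈ stdSimplex ℝ ι)
    (hmin : IsMinOn (sparsemaxObjective s) (stdSimplex ℝ ι) p) :
    p = fun j => max 0 (s j - t) := by
  have hle := isMinOn_iff.mp hmin _ (show (fun j => max 0 (s j - t)) ∈ stdSimplex ℝ ι from
    ⟨fun _ => le_max_left _ _, ht⟩)
  have hgap := sparsemaxObjective_add_half_sum_sq_le ht hp
  have hzero : ∑ j, (p j - max 0 (s j - t)) ^ 2 = 0 :=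
    le_antisymm (by linarith) (sum_nonneg fun j _ => sq_nonneg _)
  funext j
  rw [sum_eq_zero_iff_of_nonneg fun j _ => sq_nonneg _] at hzero
  exact sub_eq_zero.mp (pow_eq_zero_iff two_ne_zero |>.mp (hzero j (mem_univ j)))

end Threshold

/-- The L2-regularized objective `-∑ⱼ pⱼ sⱼ + (1/2)∑ⱼ pⱼ²` has a
unique minimizer over the probability simplex, and this minimizer has the
Sparsemax form `p*ⱼ = max 0 (sⱼ - t)` for a threshold `t` with
`∑ⱼ max 0 (sⱼ - t) = 1`. -/
theorem sparsemax_from_l2_regularization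
    (m : ℕ) (hm : 1 ≤ m) (s : Fin m → ℝ) :
    let Δ : Set (Fin m → ℝ) := {p | (∀ j, 0 ≤ p j) ∧ ∑ j, p j = 1}
    let J : (Fin m → ℝ) → ℝ := fun p =>
      -∑ j, p j * s j + (1/2) * ∑ j, (p j) ^ 2
    (∃! p, p ∈ Δ ∧ IsMinOn J Δ p) ∧
      ∀ p, (p ∈ Δ ∧ IsMinOn J Δ p) →
        ∃ t : ℝ, (∀ j, p j = max 0 (s j - t)) ∧ ∑ j, max 0 (s j - t) = 1 := by
  intro Δ J
  have : Nonempty (Fin m) := ⟨⟨0, hm⟩⟩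
  obtain ⟨t, ht⟩ := exists_sum_max_zero_sub_eq s zero_le_one
  have hq : (fun j => max 0 (s j - t)) ∈ Δ := ⟨fun _ => le_max_left _ _, ht⟩
  have huniq : ∀ p, p ∈ Δ ∧ IsMinOn J Δ p → p = fun j => max 0 (s j - t) :=
    fun p hp => eq_of_isMinOn_sparsemaxObjective ht hp.1 hp.2
  exact ⟨⟨_, ⟨hq, isMinOn_sparsemaxObjective ht⟩, huniq⟩,
    fun p hp => ⟨t, fun j => congrFun (huniq p hp) j, ht⟩⟩
end

section
/- Let m ≥ 1, α > 1, and s ∈ ℝ^m. Define the regularizer Ω(p) = (1/(α(α-1))) ∑_{j=1}^m (p_j^α - p_j). The function p ↦ -∑_{j=1}^m p_j s_j + Ω(p) has a unique minimizer p* over the probability simplex Δ^{m-1}, and there exists a threshold t ∈ ℝ such that for every j, p*_j = (max(0, (α-1)(s_j - t)))^{1/(α-1)}. (This is the α-entmax transformation.) -/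
/-!
Writing `a = (α - 1)(sⱼ - t)`, on the simplex the objective equals, up to the constant
`-t - 1/(α(α-1))`, the separable sum `(1/(α-1)) ∑ⱼ (pⱼ^α/α - a pⱼ)`. Each scalar function
`x ↦ x^α/α - a x` has derivative `x^(α-1) - a` and so is uniquely minimized on `[0, ∞)` at
`max(0, a)^(1/(α-1))`. Choosing the threshold `t` by the intermediate value theorem so that these
minimizers sum to one gives a point of the simplex that strictly beats every other one.
-/

open Real Finset

noncomputable section

namespace Entmax

def potential (α a x : ℝ) : ℝ := x ^ α / α - a * x

def clip (α a : ℝ) : ℝ := (max 0 a) ^ (1 / (α - 1))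

def entmax {ι : Type*} (α : ℝ) (s : ι → ℝ) (t : ℝ) : ι → ℝ :=
  fun j => clip α ((α - 1) * (s j - t))

def tsallisObjective {ι : Type*} [Fintype ι] (α : ℝ) (s p : ι → ℝ) : ℝ :=
  -∑ j, p j * s j + (1 / (α * (α - 1))) * ∑ j, (p j ^ α - p j)

section Scalar

variable {α : ℝ}

lemma clip_nonneg (α a : ℝ) : 0 ≤ clip α a :=
  rpow_nonneg (le_max_left _ _) _

lemma clip_rpow_sub_one (hα : 1 < α) (a : ℝ) : clip α a ^ (α - 1) = max 0 a := by
  rw [clip, one_div, rpow_inv_rpow (le_max_left _ _) (by linarith)]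

lemma clip_of_nonpos (hα : 1 < α) {a : ℝ} (ha : a ≤ 0) : clip α a = 0 := by
  rw [clip, max_eq_left ha, zero_rpow (one_div_pos.2 (sub_pos.2 hα)).ne']

lemma clip_one (α : ℝ) : clip α 1 = 1 := by
  rw [clip, max_eq_right zero_le_one, one_rpow]

lemma continuous_clip (hα : 1 < α) : Continuous (clip α) :=
  (continuous_const.max continuous_id).rpow_const fun _ =>
    Or.inr (one_div_pos.2 (sub_pos.2 hα)).le

lemma hasDerivAt_potential (hα : 1 ≤ α) (a x : ℝ) :
    HasDerivAt (potential α a) (x ^ (α - 1) - a) x := by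
  refine (((hasDerivAt_rpow_const (Or.inr hα)).div_const α).sub
    ((hasDerivAt_id x).const_mul a)).congr_deriv ?_
  field_simp [show α ≠ 0 by linarith]

lemma potential_strictMonoOn (hα : 1 < α) (a : ℝ) :
    StrictMonoOn (potential α a) (Set.Ici (clip α a)) := by
  have hd := hasDerivAt_potential hα.le a
  refine strictMonoOn_of_deriv_pos (convex_Ici _)
    (fun x _ => (hd x).continuousAt.continuousWithinAt) fun y hy => ?_
  rw [interior_Ici] at hy
  have hlt := rpow_lt_rpow (clip_nonneg α a) hy (sub_pos.2 hα)
  rw [clip_rpow_sub_one hα] at hlt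
  rw [(hd y).deriv]
  linarith [le_max_right 0 a]

lemma potential_strictAntiOn (hα : 1 < α) (a : ℝ) :
    StrictAntiOn (potential α a) (Set.Icc 0 (clip α a)) := by
  have hd := hasDerivAt_potential hα.le a
  refine strictAntiOn_of_deriv_neg (convex_Icc _ _)
    (fun x _ => (hd x).continuousAt.continuousWithinAt) fun y hy => ?_
  rw [interior_Icc] at hy
  have hlt := rpow_lt_rpow hy.1.le hy.2 (sub_pos.2 hα)
  rw [clip_rpow_sub_one hα] at hlt
  -- `max 0 a > y^(α-1) ≥ 0`, so the maximum is `a`.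
  have hmax : max 0 a = a :=
    max_eq_right (not_lt.1 fun ha => by
      rw [max_eq_left ha.le] at hlt; linarith [rpow_nonneg hy.1.le (α - 1)])
  rw [(hd y).deriv]
  linarith

lemma potential_clip_lt (hα : 1 < α) (a : ℝ) {x : ℝ} (hx : 0 ≤ x) (hne : x ≠ clip α a) :
    potential α a (clip α a) < potential α a x := by
  rcases hne.lt_or_gt with h | h
  · exact potential_strictAntiOn hα a ⟨hx, h.le⟩ ⟨clip_nonneg α a, le_rfl⟩ h
  · exact potential_strictMonoOn hα a (Set.mem_Ici.2 le_rfl) h.le h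

lemma potential_clip_le (hα : 1 < α) (a : ℝ) {x : ℝ} (hx : 0 ≤ x) :
    potential α a (clip α a) ≤ potential α a x := by
  rcases eq_or_ne x (clip α a) with h | h
  · rw [h]
  · exact (potential_clip_lt hα a hx h).le

end Scalar

variable {ι : Type*} [Fintype ι] {α : ℝ}

lemma exists_sum_entmax_eq_one [Nonempty ι] (hα : 1 < α) (s : ι → ℝ) :
    ∃ t, ∑ j, entmax α s t j = 1 := by
  have hβ : 0 < α - 1 := sub_pos.2 hα
  obtain ⟨j₀, -, hj₀⟩ := exists_max_image univ s univ_nonempty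
  have hcont : Continuous fun t => ∑ j, entmax α s t j :=
    continuous_finsetSum _ fun j _ => (continuous_clip hα).comp (by fun_prop)
  have hzero : ∑ j, entmax α s (s j₀) j = 0 :=
    sum_eq_zero fun j hj => clip_of_nonpos hα
      (mul_nonpos_of_nonneg_of_nonpos hβ.le (sub_nonpos.2 (hj₀ j hj)))
  have hone : 1 ≤ ∑ j, entmax α s (s j₀ - 1 / (α - 1)) j := by
    have hj₀one : entmax α s (s j₀ - 1 / (α - 1)) j₀ = 1 := by
      rw [entmax, sub_sub_cancel, mul_one_div_cancel hβ.ne', clip_one]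
    calc 1 = entmax α s (s j₀ - 1 / (α - 1)) j₀ := hj₀one.symm
      _ ≤ _ := single_le_sum (f := entmax α s _) (fun j _ => clip_nonneg _ _) (mem_univ j₀)
  obtain ⟨t, -, ht⟩ := intermediate_value_Icc'
    (sub_le_self _ (one_div_pos.2 hβ).le) hcont.continuousOn
    (show (1 : ℝ) ∈ Set.Icc _ _ from ⟨hzero ▸ zero_le_one, hone⟩)
  exact ⟨t, ht⟩

lemma tsallisObjective_eq_sum_potential (hα : 1 < α) (s : ι → ℝ) (t : ℝ) {p : ι → ℝ}
    (hp : ∑ j, p j = 1) :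
    tsallisObjective α s p =
      (1 / (α - 1)) * ∑ j, potential α ((α - 1) * (s j - t)) (p j) - t -
        1 / (α * (α - 1)) := by
  have hβ : α - 1 ≠ 0 := (sub_pos.2 hα).ne'
  have hα₀ : α ≠ 0 := by linarith
  have hlin : ∑ j, (α - 1) * (s j - t) * p j = (α - 1) * ∑ j, p j * s j - (α - 1) * t := by
    simp only [mul_sub, sub_mul, sum_sub_distrib, mul_assoc, ← mul_sum, hp,
      mul_comm (s _)]
    ring
  simp only [tsallisObjective, potential, sum_sub_distrib, ← sum_div, hp, hlin]
  field_simp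
  ring

lemma tsallisObjective_entmax_lt (hα : 1 < α) (s : ι → ℝ) {t : ℝ}
    (ht : ∑ j, entmax α s t j = 1) {p : ι → ℝ} (hp₀ : ∀ j, 0 ≤ p j) (hp : ∑ j, p j = 1)
    (hne : p ≠ entmax α s t) :
    tsallisObjective α s (entmax α s t) < tsallisObjective α s p := by
  obtain ⟨j₁, hj₁⟩ := Function.ne_iff.1 hne
  rw [tsallisObjective_eq_sum_potential hα s t hp, tsallisObjective_eq_sum_potential hα s t ht]
  have hsum := sum_lt_sum (fun j _ => potential_clip_le hα ((α - 1) * (s j - t)) (hp₀ j))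
    ⟨j₁, mem_univ _, potential_clip_lt hα _ (hp₀ j₁) hj₁⟩
  have := mul_lt_mul_of_pos_left hsum (one_div_pos.2 (sub_pos.2 hα))
  unfold entmax
  linarith

end Entmax

end

lemma isMinOn_and_eq_of_forall_ne_lt {α β : Type*} [Preorder β] {f : α → β} {S : Set α}
    {q : α} (hq : q ∈ S) (h : ∀ p ∈ S, p ≠ q → f q < f p) :
    IsMinOn f S q ∧ ∀ p ∈ S, IsMinOn f S p → p = q := by
  refine ⟨fun p hp => ?_, fun p hp hmin => ?_⟩
  · rcases eq_or_ne p q with rfl | hne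
    · exact le_rfl
    · exact (h p hp hne).le
  · by_contra hne
    exact (h p hp hne).not_ge (hmin hq)

open Entmax in
/-- The Tsallis-entropy-regularized objective
`-∑ⱼ pⱼ sⱼ + (1/(α(α-1))) ∑ⱼ (pⱼ^α - pⱼ)` has a unique minimizer over the
probability simplex, of the α-entmax form
`p*ⱼ = (max 0 ((α-1)(sⱼ - t)))^(1/(α-1))` for some threshold `t`. -/
theorem alpha_entmax_from_tsallis_entropy
    (m : ℕ) (hm : 1 ≤ m) (α : ℝ) (hα : 1 < α) (s : Fin m → ℝ) :
    let Δ : Set (Fin m → ℝ) := {p | (∀ j, 0 ≤ p j) ∧ ∑ j, p j = 1}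
    let Ω : (Fin m → ℝ) → ℝ := fun p =>
      (1 / (α * (α - 1))) * ∑ j, ((p j) ^ α - p j)
    let J : (Fin m → ℝ) → ℝ := fun p => -∑ j, p j * s j + Ω p
    (∃! p, p ∈ Δ ∧ IsMinOn J Δ p) ∧
      ∀ p, (p ∈ Δ ∧ IsMinOn J Δ p) →
        ∃ t : ℝ, ∀ j, p j = (max 0 ((α - 1) * (s j - t))) ^ (1 / (α - 1)) := by
  intro Δ Ω J
  have : Nonempty (Fin m) := ⟨⟨0, hm⟩⟩
  obtain ⟨t, ht⟩ := exists_sum_entmax_eq_one hα s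
  have hqΔ : entmax α s t ∈ Δ := ⟨fun j => clip_nonneg _ _, ht⟩
  obtain ⟨hmin, huniq⟩ := isMinOn_and_eq_of_forall_ne_lt (f := J) hqΔ
    fun p hp hne => tsallisObjective_entmax_lt hα s ht hp.1 hp.2 hne
  exact ⟨⟨_, ⟨hqΔ, hmin⟩, fun p hp => huniq p hp.1 hp.2⟩,
    fun p hp => ⟨t, fun j => by rw [huniq p hp.1 hp.2]; rfl⟩⟩
end
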